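/- arXiv:1603.06037 — 2 statements merged into one kernel-verified Lean document; each statement's English description precedes it below -/
import Mathlib

section
/- For every x > 0 and μ > 0, x·log x - μ·log μ - (1 + log μ)(x - μ) ≥ (x-μ)²/(2·max(x,μ)). Moreover, if |x - μ| ≥ μ then x·log x - μ·log μ - (1+log μ)(x-μ) ≥ |x-μ|/4, and if |x-μ| ≤ μ then it is ≥ |x-μ|²/(4μ). -/
/-!
Writing `t = x / μ`, the left-hand side is `μ * klFun t` with `klFun t = t log t + 1 - t`, which
satisfies `klFun 1 = klFun' 1 = 0` and `klFun'' s = 1 / s ≥ 1 / max t 1` for `s` between `1` and `t`.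
Hence `klFun t - (t - 1)² / (2 max t 1)` is monotone away from its zero at `t = 1`, which gives the
first bound. The other two follow from it, since `|x - μ| ≥ μ` forces `x ≥ 2μ`, while
`|x - μ| ≤ μ` gives `max x μ ≤ 2μ`.
-/

open Real Set InformationTheory

lemma hasDerivAt_klFun_sub_mul_sq (c : ℝ) {s : ℝ} (hs : s ≠ 0) :
    HasDerivAt (fun u ↦ klFun u - c * (u - 1) ^ 2 / 2) (log s - c * (s - 1)) s := by
  have hsq : HasDerivAt (fun u ↦ c * (u - 1) ^ 2 / 2) (c * (s - 1)) s := by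
    refine ((((hasDerivAt_id' s).sub_const 1).fun_pow 2).const_mul c |>.div_const 2).congr_deriv ?_
    push_cast
    ring
  exact (hasDerivAt_klFun hs).sub hsq

lemma continuousOn_klFun_sub_mul_sq (c : ℝ) (s : Set ℝ) :
    ContinuousOn (fun u ↦ klFun u - c * (u - 1) ^ 2 / 2) s :=
  (continuous_klFun.sub (by fun_prop)).continuousOn

lemma sq_sub_one_div_two_le_klFun {t : ℝ} (ht : 0 < t) (ht1 : t ≤ 1) :
    (t - 1) ^ 2 / 2 ≤ klFun t := by
  have hanti : AntitoneOn (fun u ↦ klFun u - 1 * (u - 1) ^ 2 / 2) (Icc t 1) := by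
    refine antitoneOn_of_hasDerivWithinAt_nonpos (f' := fun s ↦ log s - 1 * (s - 1))
      (convex_Icc t 1) (continuousOn_klFun_sub_mul_sq 1 _) (fun s hs ↦ ?_) (fun s hs ↦ ?_)
    all_goals rw [interior_Icc] at hs
    · exact (hasDerivAt_klFun_sub_mul_sq 1 (ht.trans hs.1).ne').hasDerivWithinAt
    · linarith [log_le_sub_one_of_pos (ht.trans hs.1)]
  have hend := hanti (left_mem_Icc.2 ht1) (right_mem_Icc.2 ht1) ht1
  simp only [klFun_one] at hend
  linarith

lemma sq_sub_one_div_two_mul_le_klFun {t : ℝ} (ht : 1 ≤ t) :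
    (t - 1) ^ 2 / (2 * t) ≤ klFun t := by
  have ht0 : 0 < t := one_pos.trans_le ht
  have hmono : MonotoneOn (fun u ↦ klFun u - t⁻¹ * (u - 1) ^ 2 / 2) (Icc 1 t) := by
    refine monotoneOn_of_hasDerivWithinAt_nonneg (f' := fun s ↦ log s - t⁻¹ * (s - 1))
      (convex_Icc 1 t) (continuousOn_klFun_sub_mul_sq _ _) (fun s hs ↦ ?_) (fun s hs ↦ ?_)
    all_goals rw [interior_Icc] at hs
    · exact (hasDerivAt_klFun_sub_mul_sq _ (one_pos.trans hs.1).ne').hasDerivWithinAt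
    · have hs0 : 0 < s := one_pos.trans hs.1
      have hlog := one_sub_inv_le_log_of_pos hs0
      have hslope : t⁻¹ * (s - 1) ≤ 1 - s⁻¹ := by
        rw [show 1 - s⁻¹ = (s - 1) / s by field_simp, inv_mul_eq_div]
        exact div_le_div_of_nonneg_left (by linarith [hs.1]) hs0 hs.2.le
      linarith
  have hend := hmono (left_mem_Icc.2 ht) (right_mem_Icc.2 ht) ht
  simp only [klFun_one] at hend
  linarith [show (t - 1) ^ 2 / (2 * t) = t⁻¹ * (t - 1) ^ 2 / 2 by ring]

lemma sq_sub_one_div_two_mul_max_le_klFun {t : ℝ} (ht : 0 < t) :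
    (t - 1) ^ 2 / (2 * max t 1) ≤ klFun t := by
  rcases le_total t 1 with ht1 | ht1
  · simpa [max_eq_right ht1] using sq_sub_one_div_two_le_klFun ht ht1
  · simpa [max_eq_left ht1] using sq_sub_one_div_two_mul_le_klFun ht1

lemma mul_klFun_div {x μ : ℝ} (hx : x ≠ 0) (hμ : μ ≠ 0) :
    μ * klFun (x / μ) = x * log x - μ * log μ - (1 + log μ) * (x - μ) := by
  rw [klFun_apply, log_div hx hμ]
  field_simp
  ring

lemma sq_sub_div_two_mul_max_le_mul_klFun_div {x μ : ℝ} (hx : 0 < x) (hμ : 0 < μ) :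
    (x - μ) ^ 2 / (2 * max x μ) ≤ μ * klFun (x / μ) := by
  have hmax : max x μ = μ * max (x / μ) 1 := by
    rw [mul_max_of_nonneg _ _ hμ.le, mul_div_cancel₀ _ hμ.ne', mul_one]
  calc (x - μ) ^ 2 / (2 * max x μ) = μ * ((x / μ - 1) ^ 2 / (2 * max (x / μ) 1)) := by
        rw [hmax]; field_simp
    _ ≤ μ * klFun (x / μ) :=
        mul_le_mul_of_nonneg_left (sq_sub_one_div_two_mul_max_le_klFun (div_pos hx hμ)) hμ.le

lemma abs_sub_div_four_le_sq_sub_div_two_mul_max {x μ : ℝ} (hx : 0 < x) (h : μ ≤ |x - μ|) :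
    |x - μ| / 4 ≤ (x - μ) ^ 2 / (2 * max x μ) := by
  have hxμ : 2 * μ ≤ x := by
    rcases abs_cases (x - μ) with ⟨habs, -⟩ | ⟨habs, -⟩ <;> rw [habs] at h <;> linarith
  rw [abs_of_nonneg (by linarith), max_eq_left (by linarith),
    div_le_div_iff₀ (by norm_num) (by linarith)]
  nlinarith

lemma sq_abs_sub_div_four_mul_le_sq_sub_div_two_mul_max {x μ : ℝ} (hμ : 0 < μ)
    (h : |x - μ| ≤ μ) : |x - μ| ^ 2 / (4 * μ) ≤ (x - μ) ^ 2 / (2 * max x μ) := by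
  have hx : x ≤ 2 * μ := by linarith [le_abs_self (x - μ)]
  rw [sq_abs]
  have hmax : max x μ ≤ 2 * μ := max_le hx (by linarith)
  exact div_le_div_of_nonneg_left (sq_nonneg _) (by positivity) (by linarith)

theorem stmt_4 (x μ : ℝ) (hx : 0 < x) (hμ : 0 < μ) :
    x * Real.log x - μ * Real.log μ - (1 + Real.log μ) * (x - μ)
      ≥ (x - μ) ^ 2 / (2 * max x μ) ∧
    (|x - μ| ≥ μ →
      x * Real.log x - μ * Real.log μ - (1 + Real.log μ) * (x - μ) ≥ |x - μ| / 4) ∧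
    (|x - μ| ≤ μ →
      x * Real.log x - μ * Real.log μ - (1 + Real.log μ) * (x - μ) ≥ |x - μ| ^ 2 / (4 * μ)) := by
  have hquad := sq_sub_div_two_mul_max_le_mul_klFun_div hx hμ
  rw [mul_klFun_div hx.ne' hμ.ne'] at hquad
  exact ⟨hquad, fun h ↦ (abs_sub_div_four_le_sq_sub_div_two_mul_max hx h).trans hquad,
    fun h ↦ (sq_abs_sub_div_four_mul_le_sq_sub_div_two_mul_max hμ h).trans hquad⟩
end

section
/- Let a > 1, b > 1, and 0 < r ≤ min(a, b). Then there exists C = C(a, b, r) such that for all t ≥ 0: ∫₀ᵗ (1+t-s)^{-a} ∫₀ˢ (1+s-τ)^{-b} (1+τ)^{-r} dτ ds ≤ C (1+t)^{-r}. -/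
/-!
The key estimate is `∫₀ᵗ (1+t-s)^(-a) (1+s)^(-r) ds ≤ 2^(a+1)/(a-1) · (1+t)^(-r)` for `1 < a`,
`0 ≤ r ≤ a`. With `x = 1+s`, `y = 1+t-s` we have `x + y ≥ 1 + t`, so the larger of `x, y` is at
least `(x+y)/2` and supplies the decay `(1+t)^(-r)` (when it is `x`, via
`x^(-r) = x^(a-r) x^(-a)` and `a - r ≥ 0`); what remains is `x^(-a)` or `y^(-a)`, each with
integral at most `1/(a-1)` over `[0, t]`. Applied to the inner integral (exponent `b`) the
estimate bounds it by a multiple of `(1+s)^(-r)`, and applied again to the outer one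
(exponent `a`) it gives the claim.
-/

open Real MeasureTheory

lemma integral_one_add_rpow_neg_le {a x : ℝ} (ha : 1 < a) (hx : 0 ≤ x) :
    ∫ s in (0 : ℝ)..x, (1 + s) ^ (-a) ≤ 1 / (a - 1) := by
  have hshift : ∫ s in (0 : ℝ)..x, (1 + s) ^ (-a) = ∫ u in (1 : ℝ)..(1 + x), u ^ (-a) := by
    simpa using
      intervalIntegral.integral_comp_add_left (fun u => u ^ (-a)) (1 : ℝ) (a := 0) (b := x)
  have hzero : (0 : ℝ) ∉ Set.uIcc 1 (1 + x) := by
    rw [Set.uIcc_of_le (by linarith)]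
    exact fun h => absurd h.1 (by norm_num)
  have hsign : ((1 + x) ^ (-a + 1) - 1) / (-a + 1) = (1 - (1 + x) ^ (-a + 1)) / (a - 1) := by
    rw [← neg_div_neg_eq]; ring_nf
  rw [hshift, integral_rpow (Or.inr ⟨by linarith, hzero⟩), one_rpow, hsign]
  gcongr
  linarith [rpow_nonneg (by linarith : (0 : ℝ) ≤ 1 + x) (-a + 1)]

lemma rpow_neg_le_two_rpow_mul_rpow_neg {y w p : ℝ} (hw : 0 < w) (hwy : w ≤ 2 * y)
    (hp : 0 ≤ p) : y ^ (-p) ≤ 2 ^ p * w ^ (-p) := by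
  have hsplit : 2 ^ p * (2 * y) ^ (-p) = y ^ (-p) := by
    rw [mul_rpow (by norm_num) (by linarith), ← mul_assoc, ← rpow_add (by norm_num)]
    simp
  rw [← hsplit]
  exact mul_le_mul_of_nonneg_left (rpow_le_rpow_of_nonpos hw hwy (by linarith)) (by positivity)

lemma rpow_neg_mul_rpow_neg_le {x y a r : ℝ} (hx : 0 < x) (hy : 0 < y) (hr : 0 ≤ r)
    (hra : r ≤ a) :
    y ^ (-a) * x ^ (-r) ≤ 2 ^ a * (x + y) ^ (-r) * (x ^ (-a) + y ^ (-a)) := by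
  rcases le_total x y with hxy | hyx
  · have hy' :=
      rpow_neg_le_two_rpow_mul_rpow_neg (y := y) (add_pos hx hy) (by linarith) (hr.trans hra)
    have hx' : x ^ (-r) ≤ (x + y) ^ (-r + a) * x ^ (-a) := by
      calc x ^ (-r) = x ^ (-r + a) * x ^ (-a) := by rw [← rpow_add hx]; ring_nf
        _ ≤ (x + y) ^ (-r + a) * x ^ (-a) := by gcongr; linarith; linarith
    calc y ^ (-a) * x ^ (-r) ≤ 2 ^ a * (x + y) ^ (-a) * ((x + y) ^ (-r + a) * x ^ (-a)) := by
          gcongr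
      _ = 2 ^ a * (x + y) ^ (-r) * x ^ (-a) := by
          have hexp : (x + y) ^ (-a) * (x + y) ^ (-r + a) = (x + y) ^ (-r) := by
            rw [← rpow_add (add_pos hx hy)]; ring_nf
          rw [← hexp]; ring
      _ ≤ 2 ^ a * (x + y) ^ (-r) * (x ^ (-a) + y ^ (-a)) := by
          gcongr; exact le_add_of_nonneg_right (rpow_nonneg hy.le _)
  · have hx' := rpow_neg_le_two_rpow_mul_rpow_neg (y := x) (add_pos hx hy) (by linarith) hr
    have h2 : (2 : ℝ) ^ r ≤ 2 ^ a := rpow_le_rpow_of_exponent_le (by norm_num) hra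
    calc y ^ (-a) * x ^ (-r) ≤ y ^ (-a) * (2 ^ a * (x + y) ^ (-r)) := by
          gcongr; exact hx'.trans (by gcongr)
      _ ≤ 2 ^ a * (x + y) ^ (-r) * (x ^ (-a) + y ^ (-a)) := by
          rw [mul_comm]; gcongr; exact le_add_of_nonneg_left (rpow_nonneg hx.le _)

lemma intervalIntegral.integral_mono_on_of_nonneg {μ : Measure ℝ} {f g : ℝ → ℝ} {a b : ℝ}
    (hab : a ≤ b) (hg : IntervalIntegrable g μ a b) (hf : ∀ x ∈ Set.Icc a b, 0 ≤ f x)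
    (hfg : ∀ x ∈ Set.Icc a b, f x ≤ g x) :
    ∫ x in a..b, f x ∂μ ≤ ∫ x in a..b, g x ∂μ := by
  rw [intervalIntegral.integral_of_le hab, intervalIntegral.integral_of_le hab]
  refine integral_mono_of_nonneg ?_ hg.1 ?_ <;>
    filter_upwards [ae_restrict_mem measurableSet_Ioc] with x hx
  exacts [hf x (Set.Ioc_subset_Icc_self hx), hfg x (Set.Ioc_subset_Icc_self hx)]

section Continuity

variable {t : ℝ} (p : ℝ)

lemma continuousOn_one_add_rpow : ContinuousOn (fun s : ℝ => (1 + s) ^ p) (Set.Icc 0 t) :=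
  (continuous_const.add continuous_id).continuousOn.rpow_const fun s hs =>
    Or.inl (show (0 : ℝ) < 1 + s by linarith [hs.1]).ne'

lemma continuousOn_one_add_sub_rpow :
    ContinuousOn (fun s : ℝ => (1 + t - s) ^ p) (Set.Icc 0 t) :=
  (continuous_const.sub continuous_id).continuousOn.rpow_const fun s hs =>
    Or.inl (show (0 : ℝ) < 1 + t - s by linarith [hs.2]).ne'

end Continuity

lemma integral_one_add_sub_rpow_neg_mul_one_add_rpow_neg_le {a r t : ℝ} (ha : 1 < a)
    (hr : 0 ≤ r) (hra : r ≤ a) (ht : 0 ≤ t) :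
    ∫ s in (0 : ℝ)..t, (1 + t - s) ^ (-a) * (1 + s) ^ (-r) ≤
      2 ^ (a + 1) / (a - 1) * (1 + t) ^ (-r) := by
  have hL := (continuousOn_one_add_sub_rpow (t := t) (-a)).mul (continuousOn_one_add_rpow (-r))
  have hX := (continuousOn_one_add_rpow (t := t) (-a)).intervalIntegrable_of_Icc
    (μ := volume) ht
  have hY := (continuousOn_one_add_sub_rpow (t := t) (-a)).intervalIntegrable_of_Icc
    (μ := volume) ht
  have hreflect :
      ∫ s in (0 : ℝ)..t, (1 + t - s) ^ (-a) = ∫ s in (0 : ℝ)..t, (1 + s) ^ (-a) := by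
    simpa [add_sub_assoc] using
      intervalIntegral.integral_comp_sub_left (fun u => (1 + u) ^ (-a)) t (a := 0) (b := t)
  have hpointwise : ∀ s ∈ Set.Icc 0 t, (1 + t - s) ^ (-a) * (1 + s) ^ (-r) ≤
      2 ^ a * (1 + t) ^ (-r) * ((1 + s) ^ (-a) + (1 + t - s) ^ (-a)) := by
    rintro s ⟨hs0, hst⟩
    have hsum : (1 + s) + (1 + t - s) = 2 + t := by ring
    refine (rpow_neg_mul_rpow_neg_le (by linarith) (by linarith) hr hra).trans ?_
    have hdecay : (2 + t) ^ (-r) ≤ (1 + t) ^ (-r) :=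
      rpow_le_rpow_of_nonpos (by linarith) (by linarith) (by linarith)
    rw [hsum]
    exact mul_le_mul_of_nonneg_right (mul_le_mul_of_nonneg_left hdecay (by positivity))
      (add_nonneg (rpow_nonneg (by linarith) _) (rpow_nonneg (by linarith) _))
  calc ∫ s in (0 : ℝ)..t, (1 + t - s) ^ (-a) * (1 + s) ^ (-r)
      ≤ ∫ s in (0 : ℝ)..t, 2 ^ a * (1 + t) ^ (-r) * ((1 + s) ^ (-a) + (1 + t - s) ^ (-a)) :=
        intervalIntegral.integral_mono_on ht (hL.intervalIntegrable_of_Icc ht)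
          ((hX.add hY).const_mul _) hpointwise
    _ = 2 ^ a * (1 + t) ^ (-r) * (2 * ∫ s in (0 : ℝ)..t, (1 + s) ^ (-a)) := by
        rw [intervalIntegral.integral_const_mul, intervalIntegral.integral_add hX hY, hreflect,
          two_mul]
    _ ≤ 2 ^ a * (1 + t) ^ (-r) * (2 * (1 / (a - 1))) := by
        gcongr
        exact integral_one_add_rpow_neg_le ha ht
    _ = 2 ^ (a + 1) / (a - 1) * (1 + t) ^ (-r) := by
        rw [rpow_add_one two_ne_zero]; ring

lemma integral_one_add_sub_rpow_neg_mul_le {a r t K : ℝ} {g : ℝ → ℝ} (ha : 1 < a)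
    (hr : 0 ≤ r) (hra : r ≤ a) (ht : 0 ≤ t) (hg0 : ∀ s ∈ Set.Icc 0 t, 0 ≤ g s)
    (hg : ∀ s ∈ Set.Icc 0 t, g s ≤ K * (1 + s) ^ (-r)) :
    ∫ s in (0 : ℝ)..t, (1 + t - s) ^ (-a) * g s ≤
      K * (2 ^ (a + 1) / (a - 1)) * (1 + t) ^ (-r) := by
  have hK : 0 ≤ K := by
    simpa using (hg0 0 ⟨le_rfl, ht⟩).trans (hg 0 ⟨le_rfl, ht⟩)
  have hL := ((continuousOn_one_add_sub_rpow (t := t) (-a)).mul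
    (continuousOn_one_add_rpow (-r))).intervalIntegrable_of_Icc (μ := volume) ht
  have hdom : ∀ s ∈ Set.Icc 0 t,
      (1 + t - s) ^ (-a) * g s ≤ K * ((1 + t - s) ^ (-a) * (1 + s) ^ (-r)) := fun s hs => by
    rw [mul_left_comm]
    exact mul_le_mul_of_nonneg_left (hg s hs) (rpow_nonneg (by linarith [hs.2]) _)
  calc _ ≤ ∫ s in (0 : ℝ)..t, K * ((1 + t - s) ^ (-a) * (1 + s) ^ (-r)) :=
        intervalIntegral.integral_mono_on_of_nonneg ht (hL.const_mul K)
          (fun s hs => mul_nonneg (rpow_nonneg (by linarith [hs.2]) _) (hg0 s hs)) hdom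
    _ ≤ K * (2 ^ (a + 1) / (a - 1) * (1 + t) ^ (-r)) := by
        rw [intervalIntegral.integral_const_mul]
        exact mul_le_mul_of_nonneg_left
          (integral_one_add_sub_rpow_neg_mul_one_add_rpow_neg_le ha hr hra ht) hK
    _ = K * (2 ^ (a + 1) / (a - 1)) * (1 + t) ^ (-r) := by ring

theorem stmt_10 (a b r : ℝ) (ha : 1 < a) (hb : 1 < b) (hr0 : 0 < r)
    (hr : r ≤ min a b) :
    ∃ C : ℝ, 0 < C ∧ ∀ t : ℝ, 0 ≤ t →
      (∫ s in (0 : ℝ)..t, (1 + t - s) ^ (-a) *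
          ∫ τ in (0 : ℝ)..s, (1 + s - τ) ^ (-b) * (1 + τ) ^ (-r))
        ≤ C * (1 + t) ^ (-r) := by
  have hra : r ≤ a := hr.trans (min_le_left a b)
  have hrb : r ≤ b := hr.trans (min_le_right a b)
  have hC : 0 < 2 ^ (b + 1) / (b - 1) * (2 ^ (a + 1) / (a - 1)) :=
    mul_pos (div_pos (by positivity) (by linarith)) (div_pos (by positivity) (by linarith))
  refine ⟨_, hC, fun t ht => integral_one_add_sub_rpow_neg_mul_le ha hr0.le hra ht ?_ ?_⟩
  · rintro s ⟨hs0, -⟩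
    refine intervalIntegral.integral_nonneg hs0 fun τ ⟨hτ0, hτs⟩ => ?_
    exact mul_nonneg (rpow_nonneg (by linarith) _) (rpow_nonneg (by linarith) _)
  · exact fun s hs => integral_one_add_sub_rpow_neg_mul_one_add_rpow_neg_le hb hr0.le hrb hs.1
end
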